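/- arXiv:2512.19329 — 3 statements merged into one kernel-verified Lean document; each statement's English description precedes it below -/
import Mathlib

section
/- Let n ≥ 2 be an integer, p > 2, K > 0, λ = (nK)^{p/2}/(p-1)^{p-1}, and b = (1/n − (1 − 1/n)(1 − 2/p)) λ. Then for all real X ≥ 0 and Y ≥ 0, (n-1)K · X^{2(p-1)} − (p-1)(λ − b) · Y^{p-2} X^{p} + (λ²/n − bλ) · Y^{2(p-1)} ≥ 0. -/
set_option maxHeartbeats 1000000 in


/-- Key pointwise estimate: with `λ = (nK)^(p/2)/(p-1)^(p-1)` and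
`b = (1/n − (1 − 1/n)(1 − 2/p)) λ`, for all `X, Y ≥ 0`,
`(n-1)K X^(2(p-1)) − (p-1)(λ−b) Y^(p-2) X^p + (λ²/n − bλ) Y^(2(p-1)) ≥ 0`. -/
theorem stmt_5 (n : ℕ) (hn : 2 ≤ n) (p K lam b : ℝ) (hp : 2 < p) (hK : 0 < K)
    (hlam : lam = ((n : ℝ) * K) ^ (p / 2) / (p - 1) ^ (p - 1))
    (hb : b = (1 / (n : ℝ) - (1 - 1 / (n : ℝ)) * (1 - 2 / p)) * lam)
    (X Y : ℝ) (hX : 0 ≤ X) (hY : 0 ≤ Y) :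
    0 ≤ ((n : ℝ) - 1) * K * X ^ (2 * (p - 1))
        - (p - 1) * (lam - b) * Y ^ (p - 2) * X ^ p
        + (lam ^ 2 / (n : ℝ) - b * lam) * Y ^ (2 * (p - 1)) := by
  have hn' : (2:ℝ) ≤ (n:ℝ) := by exact_mod_cast hn
  have hn0 : (0:ℝ) < (n:ℝ) := by linarith
  have hp0 : (0:ℝ) < p := by linarith
  have hp1 : (0:ℝ) < p - 1 := by linarith
  have hp2 : (0:ℝ) < p - 2 := by linarith
  have hnK : (0:ℝ) < (n:ℝ) * K := by positivity
  have hlam0 : 0 < lam := by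
    rw [hlam]; positivity
  -- coefficient identities
  have hC : (p - 1) * (lam - b)
      = 2 * (p - 1) ^ 2 * ((n:ℝ) - 1) * lam / ((n:ℝ) * p) := by
    rw [hb]; field_simp; ring
  have hD : lam ^ 2 / (n:ℝ) - b * lam
      = lam ^ 2 * ((n:ℝ) - 1) * (p - 2) / ((n:ℝ) * p) := by
    rw [hb]; field_simp; ring
  rcases eq_or_lt_of_le hY with hY0 | hY0
  · rw [← hY0, Real.zero_rpow (by linarith : p - 2 ≠ 0),
      Real.zero_rpow (by positivity : 2 * (p - 1) ≠ 0)]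
    have : (0:ℝ) ≤ ((n:ℝ) - 1) * K * X ^ (2 * (p - 1)) := by
      have := Real.rpow_nonneg hX (2 * (p - 1))
      have h1 : (0:ℝ) ≤ (n:ℝ) - 1 := by linarith
      positivity
    linarith
  rcases eq_or_lt_of_le hX with hX0 | hX0
  · rw [← hX0, Real.zero_rpow (by positivity : 2 * (p - 1) ≠ 0),
      Real.zero_rpow (by positivity : p ≠ 0)]
    rw [hD]
    have : (0:ℝ) ≤ lam ^ 2 * ((n:ℝ) - 1) * (p - 2) / ((n:ℝ) * p) := by
      have h1 : (0:ℝ) ≤ (n:ℝ) - 1 := by linarith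
      positivity
    have := Real.rpow_nonneg hY (2 * (p - 1))
    nlinarith [Real.rpow_nonneg hY (2 * (p - 1))]
  -- main case: X > 0, Y > 0
  set θ : ℝ := p / (2 * (p - 1)) with hθdef
  set w : ℝ := (p - 2) / (2 * (p - 1)) with hwdef
  have hθnn : 0 ≤ θ := by positivity
  have hwnn : 0 ≤ w := by positivity
  have hw1 : θ + w = 1 := by
    rw [hθdef, hwdef]; field_simp; ring
  set A : ℝ := 2 * (p - 1) * K / p with hAdef
  set B : ℝ := 2 * (p - 1) * lam ^ 2 / ((n:ℝ) * p) with hBdef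
  have hA0 : 0 < A := by rw [hAdef]; positivity
  have hB0 : 0 < B := by rw [hBdef]; positivity
  have hXS : 0 < X ^ (2 * (p - 1)) := Real.rpow_pos_of_pos hX0 _
  have hYS : 0 < Y ^ (2 * (p - 1)) := Real.rpow_pos_of_pos hY0 _
  have hYoung := Real.geom_mean_le_arith_mean2_weighted hθnn hwnn
    (by positivity : (0:ℝ) ≤ A * X ^ (2 * (p - 1)))
    (by positivity : (0:ℝ) ≤ B * Y ^ (2 * (p - 1))) hw1
  -- log of lam
  have hlog_lam : Real.log lam
      = p / 2 * (Real.log (n:ℝ) + Real.log K) - (p - 1) * Real.log (p - 1) := by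
    rw [hlam, Real.log_div (by positivity) (by positivity),
      Real.log_rpow hnK, Real.log_rpow hp1, Real.log_mul (ne_of_gt hn0) (ne_of_gt hK)]
  -- constant identity
  have hconst : A ^ θ * B ^ w = 2 * (p - 1) ^ 2 * lam / ((n:ℝ) * p) := by
    have hR0 : (0:ℝ) < 2 * (p - 1) ^ 2 * lam / ((n:ℝ) * p) := by positivity
    have hL0 : (0:ℝ) < A ^ θ * B ^ w := by positivity
    rw [← Real.exp_log hL0, ← Real.exp_log hR0]
    congr 1
    rw [Real.log_mul (by positivity) (by positivity), Real.log_rpow hA0,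
      Real.log_rpow hB0, hAdef, hBdef]
    rw [Real.log_div (by positivity) (ne_of_gt hp0),
      Real.log_div (by positivity) (by positivity),
      Real.log_div (by positivity) (by positivity),
      Real.log_mul (by positivity) (ne_of_gt hK),
      Real.log_mul (by positivity) (by positivity : lam ^ 2 ≠ 0),
      Real.log_mul (by norm_num) (by positivity : (p-1) ≠ 0),
      Real.log_mul (ne_of_gt hn0) (ne_of_gt hp0),
      Real.log_mul (by positivity : 2 * (p-1)^2 ≠ 0) (ne_of_gt hlam0),
      Real.log_mul (by norm_num) (by positivity : (p-1)^2 ≠ 0),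
      Real.log_pow, Real.log_pow, hlog_lam]
    push_cast
    rw [hθdef, hwdef]
    field_simp
    ring
  -- rewrite Young's inequality
  have hXp : (X ^ (2 * (p - 1))) ^ θ = X ^ p := by
    rw [← Real.rpow_mul hX]
    congr 1
    rw [hθdef]; field_simp
  have hYw : (Y ^ (2 * (p - 1))) ^ w = Y ^ (p - 2) := by
    rw [← Real.rpow_mul hY]
    congr 1
    rw [hwdef]; field_simp
  have hgeom : (A * X ^ (2 * (p - 1))) ^ θ * (B * Y ^ (2 * (p - 1))) ^ w
      = 2 * (p - 1) ^ 2 * lam / ((n:ℝ) * p) * (X ^ p * Y ^ (p - 2)) := by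
    rw [Real.mul_rpow hA0.le hXS.le, Real.mul_rpow hB0.le hYS.le, hXp, hYw, ← hconst]
    ring
  have hθA : θ * (A * X ^ (2 * (p - 1))) = K * X ^ (2 * (p - 1)) := by
    rw [hθdef, hAdef]; field_simp
  have hwB : w * (B * Y ^ (2 * (p - 1)))
      = lam ^ 2 * (p - 2) / ((n:ℝ) * p) * Y ^ (2 * (p - 1)) := by
    rw [hwdef, hBdef]; field_simp
  rw [hgeom, hθA, hwB] at hYoung
  rw [hC, hD]
  have hn1 : (0:ℝ) ≤ (n:ℝ) - 1 := by linarith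
  have hkey := mul_le_mul_of_nonneg_left hYoung hn1
  ring_nf at hkey ⊢
  linarith [hkey]
end

section
/- Let n ≥ 2 and p ≥ 2 be real numbers, S a real symmetric n×n matrix, and e a unit vector in ℝ^n. Set a = ⟨S e, e⟩ and D = tr S + (p-2)a. Then ‖S‖² + (p² − 2p + 2) a² ≥ (1/n) D² + (n/(n-1)) (D/n − (p-1)a)² + 2|S e|², where ‖S‖² is the squared Frobenius norm. -/
open Matrix

/-- Refined trace/Cauchy–Schwarz inequality for symmetric matrices:
with `a = ⟨S e, e⟩`, `D = tr S + (p-2) a`,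
`‖S‖_F² + (p² − 2p + 2) a² ≥ D²/n + (n/(n-1)) (D/n − (p-1)a)² + 2|S e|²`. -/
theorem stmt_6 (n : ℕ) (hn : 2 ≤ n) (p : ℝ) (hp : 2 ≤ p)
    (S : Matrix (Fin n) (Fin n) ℝ) (hS : S.IsSymm)
    (e : Fin n → ℝ) (he : e ⬝ᵥ e = 1)
    (a D : ℝ) (ha : a = S.mulVec e ⬝ᵥ e) (hD : D = S.trace + (p - 2) * a) :
    (1 / (n : ℝ)) * D ^ 2 + ((n : ℝ) / ((n : ℝ) - 1)) * (D / (n : ℝ) - (p - 1) * a) ^ 2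
        + 2 * (S.mulVec e ⬝ᵥ S.mulVec e)
      ≤ (∑ i, ∑ j, (S i j) ^ 2) + (p ^ 2 - 2 * p + 2) * a ^ 2 := by
  classical
  set b : Fin n → ℝ := S.mulVec e with hbdef
  have hbi : ∀ i, b i = ∑ j, S i j * e j := fun i => rfl
  have hsym : ∀ i j, S j i = S i j := fun i j => hS.apply i j
  have he1 : ∑ i, e i * e i = 1 := he
  set B : ℝ := ∑ i, b i * b i with hB
  have hbB : S.mulVec e ⬝ᵥ S.mulVec e = B := rfl
  have hbe : ∑ i, b i * e i = a := ha.symm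
  have heb : ∑ i, e i * b i = a := by
    rw [← hbe]; exact Finset.sum_congr rfl fun i _ => mul_comm _ _
  set T : ℝ := S.trace with hT
  have hTr : T = ∑ i, S i i := by simp [hT, Matrix.trace, Matrix.diag]
  -- column sums
  have hcol : ∀ j, ∑ i, S i j * e i = b j := by
    intro j
    rw [hbi]
    exact Finset.sum_congr rfl fun i _ => by rw [hsym i j]
  -- ⟨Sb, e⟩-type sum
  have hc : ∑ i, e i * (∑ j, S i j * b j) = B := by
    have h1 : ∀ i, e i * ∑ j, S i j * b j = ∑ j, S i j * e i * b j := by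
      intro i; rw [Finset.mul_sum]
      exact Finset.sum_congr rfl fun j _ => by ring
    rw [Finset.sum_congr rfl fun i _ => h1 i, Finset.sum_comm]
    rw [hB]
    refine Finset.sum_congr rfl fun j _ => ?_
    rw [← Finset.sum_mul, hcol j]
  -- the auxiliary matrix M
  set M : Fin n → Fin n → ℝ :=
    fun i j => S i j - e i * b j - b i * e j + a * (e i * e j) with hM
  -- inner sum expansion for ∑ j (M i j)^2
  have hMrow : ∀ i, ∑ j, (M i j)^2
      = (∑ j, (S i j)^2) + (e i)^2 * B
        + ((b i)^2 + a^2 * (e i)^2 - 2*a*(e i)*(b i)) * 1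
        + (2*(e i)*(b i) - 2*a*(e i)^2) * a
        - 2*(e i) * (∑ j, S i j * b j)
        + (2*a*(e i) - 2*(b i)) * (b i) := by
    intro i
    have expand : ∀ j, (M i j)^2
        = (S i j)^2 + (e i)^2 * (b j * b j)
          + ((b i)^2 + a^2 * (e i)^2 - 2*a*(e i)*(b i)) * (e j * e j)
          + (2*(e i)*(b i) - 2*a*(e i)^2) * (b j * e j)
          - 2*(e i) * (S i j * b j)
          + (2*a*(e i) - 2*(b i)) * (S i j * e j) := by
      intro j; simp only [hM]; ring
    rw [Finset.sum_congr rfl fun j _ => expand j]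
    simp only [Finset.sum_add_distrib, Finset.sum_sub_distrib, ← Finset.mul_sum]
    rw [hB, he1, hbe, ← hbi]
  -- total sum of M^2
  have hM2 : ∑ i, ∑ j, (M i j)^2 = (∑ i, ∑ j, (S i j)^2) + a^2 - 2*B := by
    have step : ∀ i, (∑ j, (S i j)^2) + (e i)^2 * B
        + ((b i)^2 + a^2 * (e i)^2 - 2*a*(e i)*(b i)) * 1
        + (2*(e i)*(b i) - 2*a*(e i)^2) * a
        - 2*(e i) * (∑ j, S i j * b j)
        + (2*a*(e i) - 2*(b i)) * (b i)
        = (∑ j, (S i j)^2) + B * (e i * e i) - (b i * b i) - a^2 * (e i * e i)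
          + (2*a) * (e i * b i) - 2 * (e i * (∑ j, S i j * b j)) := by
      intro i; ring
    rw [Finset.sum_congr rfl fun i _ => (hMrow i).trans (step i)]
    simp only [Finset.sum_add_distrib, Finset.sum_sub_distrib, ← Finset.mul_sum]
    rw [he1, heb, hc, ← hB]
    ring
  -- trace of M
  have hMe : ∀ i, ∑ j, M i j * e j = 0 := by
    intro i
    have expand : ∀ j, M i j * e j
        = S i j * e j - (e i) * (b j * e j) - (b i) * (e j * e j)
          + (a * e i) * (e j * e j) := by
      intro j; simp only [hM]; ring
    rw [Finset.sum_congr rfl fun j _ => expand j]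
    simp only [Finset.sum_add_distrib, Finset.sum_sub_distrib, ← Finset.mul_sum]
    rw [he1, hbe, ← hbi]
    ring
  have hMtr : ∑ i, M i i = T - a := by
    have expand : ∀ i, M i i = S i i - 2 * (e i * b i) + a * (e i * e i) := by
      intro i; simp only [hM]; ring
    rw [Finset.sum_congr rfl fun i _ => expand i]
    simp only [Finset.sum_add_distrib, Finset.sum_sub_distrib, ← Finset.mul_sum]
    rw [he1, heb, ← hTr]
    ring
  -- the projection matrix entries
  set g : Fin n → Fin n → ℝ := fun i j => (if j = i then (1:ℝ) else 0) - e i * e j with hg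
  have hMg : ∑ i, ∑ j, M i j * g i j = T - a := by
    have row : ∀ i, ∑ j, M i j * g i j = M i i - (e i) * (∑ j, M i j * e j) := by
      intro i
      have expand : ∀ j, M i j * g i j
          = (if j = i then M i j else 0) - (e i) * (M i j * e j) := by
        intro j
        by_cases h : j = i <;> simp [hg, h] <;> ring
      rw [Finset.sum_congr rfl fun j _ => expand j]
      rw [Finset.sum_sub_distrib, Finset.sum_ite_eq' Finset.univ i (fun j => M i j),
        ← Finset.mul_sum]
      simp
    rw [Finset.sum_congr rfl fun i _ => row i]
    rw [Finset.sum_sub_distrib, hMtr]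
    rw [Finset.sum_congr rfl fun i _ => by rw [hMe i, mul_zero]]
    simp
  have hg2 : ∑ i, ∑ j, (g i j)^2 = (n : ℝ) - 1 := by
    have row : ∀ i, ∑ j, (g i j)^2 = 1 - 2 * (e i * e i) + (e i)^2 * 1 := by
      intro i
      have expand : ∀ j, (g i j)^2
          = (if j = i then 1 - 2 * (e i * e j) else 0) + (e i)^2 * (e j * e j) := by
        intro j
        by_cases h : j = i <;> simp [hg, h] <;> ring
      rw [Finset.sum_congr rfl fun j _ => expand j]
      rw [Finset.sum_add_distrib, Finset.sum_ite_eq' Finset.univ i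
        (fun j => 1 - 2 * (e i * e j)), ← Finset.mul_sum, he1]
      simp
    rw [Finset.sum_congr rfl fun i _ => row i]
    simp only [Finset.sum_add_distrib, Finset.sum_sub_distrib, ← Finset.mul_sum]
    rw [he1]
    have e2 : ∑ x, e x ^ 2 = 1 := by simpa [pow_two] using he1
    simp only [Finset.sum_const, Finset.card_univ, Fintype.card_fin, nsmul_eq_mul, mul_one]
    rw [e2]
    ring
  -- Cauchy–Schwarz
  have hCS : (T - a)^2 ≤ ((∑ i, ∑ j, (S i j)^2) + a^2 - 2*B) * ((n:ℝ) - 1) := by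
    have := Finset.sum_mul_sq_le_sq_mul_sq Finset.univ
      (fun q : Fin n × Fin n => M q.1 q.2) (fun q : Fin n × Fin n => g q.1 q.2)
    simp only [Fintype.sum_prod_type] at this
    rw [hMg, hM2, hg2] at this
    exact this
  -- final algebra
  have hn' : (2:ℝ) ≤ (n:ℝ) := by exact_mod_cast hn
  have hnpos : (0:ℝ) < (n:ℝ) := by linarith
  have h1pos : (0:ℝ) < (n:ℝ) - 1 := by linarith
  have hid : (1 / (n : ℝ)) * D ^ 2 + ((n : ℝ) / ((n : ℝ) - 1)) * (D / (n : ℝ) - (p - 1) * a) ^ 2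
      = (T - a)^2 / ((n:ℝ) - 1) + (p^2 - 2*p + 1) * a^2 := by
    rw [hD]
    field_simp
    ring
  have hfin : (T - a)^2 / ((n:ℝ) - 1) ≤ (∑ i, ∑ j, (S i j)^2) + a^2 - 2*B := by
    rw [div_le_iff₀ h1pos]
    linarith [hCS]
  rw [hbB, hid]
  linarith [hfin]
end

section
/- Let n ≥ 2, p > 2, λ > 0, K > 0, b = (1/n − (1 − 1/n)(1 − 2/p))λ with λ = (nK)^{p/2}/(p-1)^{p-1}. Then for all real numbers A, t ≥ 0, X ≥ 0, Y ≥ 0, and B ≥ |A| one has: (np(p-1)/(n-1)) (1/n + λ Y^{p-1}/n + (p-1) X^{p-2} A)² + 2 p (p-1)² X^{2(p-2)} (B² − A²) + p(p-1) [ (n-1)K X^{2(p-1)} − (p-1)(λ−b) Y^{p-2} X^{p} + (λ²/n − bλ) Y^{2(p-1)} ] + p(p-1)(λ/n − b) Y^{p-1} ≥ (p-1)(p-2)(1 − 1/n) λ Y^{p-1}. -/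
/-- Assembled pointwise lower bound (2-16) for `ℒ_u P`: with
`λ = (nK)^(p/2)/(p-1)^(p-1)`, `b = (1/n − (1 − 1/n)(1 − 2/p))λ`, for all
`A`, `t ≥ 0`, `X ≥ 0`, `Y ≥ 0`, `B ≥ |A|`:
`(np(p-1)/(n-1))(1/n + λY^(p-1)/n + (p-1)X^(p-2)A)² + 2p(p-1)²X^(2(p-2))(B² − A²)
 + p(p-1)[(n-1)K X^(2(p-1)) − (p-1)(λ−b)Y^(p-2)X^p + (λ²/n − bλ)Y^(2(p-1))]
 + p(p-1)(λ/n − b)Y^(p-1) ≥ (p-1)(p-2)(1 − 1/n)λ Y^(p-1)`. -/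
theorem stmt_12 (n : ℕ) (hn : 2 ≤ n) (p lam K b : ℝ) (hp : 2 < p) (hK : 0 < K)
    (hlam0 : 0 < lam)
    (hlam : lam = ((n : ℝ) * K) ^ (p / 2) / (p - 1) ^ (p - 1))
    (hb : b = (1 / (n : ℝ) - (1 - 1 / (n : ℝ)) * (1 - 2 / p)) * lam)
    (A t X Y B : ℝ) (ht : 0 ≤ t) (hX : 0 ≤ X) (hY : 0 ≤ Y) (hB : |A| ≤ B) :
    (p - 1) * (p - 2) * (1 - 1 / (n : ℝ)) * lam * Y ^ (p - 1)
      ≤ ((n : ℝ) * p * (p - 1) / ((n : ℝ) - 1))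
            * (1 / (n : ℝ) + lam * Y ^ (p - 1) / (n : ℝ) + (p - 1) * X ^ (p - 2) * A) ^ 2
        + 2 * p * (p - 1) ^ 2 * X ^ (2 * (p - 2)) * (B ^ 2 - A ^ 2)
        + p * (p - 1) * (((n : ℝ) - 1) * K * X ^ (2 * (p - 1))
            - (p - 1) * (lam - b) * Y ^ (p - 2) * X ^ p
            + (lam ^ 2 / (n : ℝ) - b * lam) * Y ^ (2 * (p - 1)))
        + p * (p - 1) * (lam / (n : ℝ) - b) * Y ^ (p - 1) := by
  have hn2 : (2 : ℝ) ≤ (n : ℝ) := by exact_mod_cast hn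
  have hn0 : (0 : ℝ) < (n : ℝ) := by linarith
  have hn1 : (0 : ℝ) < (n : ℝ) - 1 := by linarith
  have hp0 : (0 : ℝ) < p := by linarith
  have hp1 : (0 : ℝ) < p - 1 := by linarith
  have hp2 : (0 : ℝ) < p - 2 := by linarith
  have hnK : (0 : ℝ) < (n : ℝ) * K := by positivity
  have hm0 : (0 : ℝ) < 1 - 1 / (n : ℝ) := by
    have h1 : 1 / (n : ℝ) < 1 := by
      rw [div_lt_one hn0]; linarith
    linarith
  -- weights
  set θ : ℝ := (p - 2) / (2 * (p - 1)) with hθdef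
  set w : ℝ := p / (2 * (p - 1)) with hwdef
  have hθ0 : 0 < θ := div_pos hp2 (by linarith)
  have hw0 : 0 < w := div_pos hp0 (by linarith)
  have hsum : θ + w = 1 := by
    rw [hθdef, hwdef]; field_simp; ring
  -- the (p-1)-th root of lam
  set L : ℝ := lam ^ ((1 : ℝ) / (p - 1)) with hLdef
  have hL0 : 0 < L := Real.rpow_pos_of_pos hlam0 _
  have hlamroot : L = ((n : ℝ) * K) ^ w / (p - 1) := by
    have e1 : p / 2 * ((1 : ℝ) / (p - 1)) = w := by rw [hwdef]; field_simp
    have e2 : (p - 1) * ((1 : ℝ) / (p - 1)) = 1 := by field_simp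
    rw [hLdef, hlam, Real.div_rpow (Real.rpow_pos_of_pos hnK _).le
      (Real.rpow_pos_of_pos hp1 _).le, ← Real.rpow_mul hnK.le, ← Real.rpow_mul hp1.le,
      e1, e2, Real.rpow_one]
  have hnKw : ((n : ℝ) * K) ^ w = L * (p - 1) := by
    rw [hlamroot]; field_simp
  have h2θ : lam ^ (2 * θ) = lam / L := by
    have he : 2 * θ = 1 - 1 / (p - 1) := by
      rw [hθdef]; field_simp; ring
    rw [he, Real.rpow_sub hlam0, Real.rpow_one, hLdef]
  -- auxiliary constants for Young
  set q : ℝ := 2 * (p - 1) / p with hqdef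
  have hq0 : 0 < q := div_pos (by linarith) hp0
  set c : ℝ := q * (lam ^ 2 * (1 - 1 / (n : ℝ))) with hcdef
  set d : ℝ := q * ((1 - 1 / (n : ℝ)) * ((n : ℝ) * K)) with hddef
  have hlsq : (0 : ℝ) < lam ^ 2 := by positivity
  have hc0 : 0 < c := by
    rw [hcdef]; exact mul_pos hq0 (mul_pos hlsq hm0)
  have hd0 : 0 < d := by
    rw [hddef]; exact mul_pos hq0 (mul_pos hm0 hnK)
  clear_value θ w L q c d
  -- the three coefficient identities
  have claim1 : c ^ θ * d ^ w = (p - 1) * (lam - b) := by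
    have e1 : c ^ θ = q ^ θ * ((lam ^ 2) ^ θ * (1 - 1 / (n : ℝ)) ^ θ) := by
      rw [hcdef, Real.mul_rpow hq0.le (by positivity),
        Real.mul_rpow hlsq.le hm0.le]
    have e2 : d ^ w = q ^ w * ((1 - 1 / (n : ℝ)) ^ w * (((n : ℝ) * K)) ^ w) := by
      rw [hddef, Real.mul_rpow hq0.le (by positivity),
        Real.mul_rpow hm0.le hnK.le]
    have eq1 : q ^ θ * q ^ w = q := by
      rw [← Real.rpow_add hq0, hsum, Real.rpow_one]
    have eq2 : (1 - 1 / (n : ℝ)) ^ θ * (1 - 1 / (n : ℝ)) ^ w = 1 - 1 / (n : ℝ) := by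
      rw [← Real.rpow_add hm0, hsum, Real.rpow_one]
    have eq3 : (lam ^ 2) ^ θ = lam / L := by
      rw [← h2θ, ← Real.rpow_natCast lam 2, ← Real.rpow_mul hlam0.le]
      norm_num
    calc c ^ θ * d ^ w
        = (q ^ θ * q ^ w) * ((1 - 1 / (n : ℝ)) ^ θ * (1 - 1 / (n : ℝ)) ^ w)
            * (lam ^ 2) ^ θ * (((n : ℝ) * K)) ^ w := by rw [e1, e2]; ring
      _ = q * (1 - 1 / (n : ℝ)) * (lam / L) * (L * (p - 1)) := by
          rw [eq1, eq2, eq3, hnKw]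
      _ = q * (1 - 1 / (n : ℝ)) * lam * (p - 1) := by
          field_simp
      _ = (p - 1) * (lam - b) := by
          rw [hqdef, hb]; field_simp; ring
  have claim2 : θ * c = lam ^ 2 / (n : ℝ) - b * lam := by
    rw [hθdef, hcdef, hqdef, hb]; field_simp; ring
  have claim3 : w * d = ((n : ℝ) - 1) * K := by
    rw [hwdef, hddef, hqdef]; field_simp
  -- Young / AM-GM step
  have hYoung : (p - 1) * (lam - b) * (Y ^ (p - 2) * X ^ p)
      ≤ (lam ^ 2 / (n : ℝ) - b * lam) * Y ^ (2 * (p - 1))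
        + ((n : ℝ) - 1) * K * X ^ (2 * (p - 1)) := by
    have key := Real.geom_mean_le_arith_mean2_weighted hθ0.le hw0.le
      (show (0:ℝ) ≤ c * Y ^ (2 * (p - 1)) from
        mul_nonneg hc0.le (Real.rpow_nonneg hY _))
      (show (0:ℝ) ≤ d * X ^ (2 * (p - 1)) from
        mul_nonneg hd0.le (Real.rpow_nonneg hX _)) hsum
    have eY : (c * Y ^ (2 * (p - 1))) ^ θ = c ^ θ * Y ^ (p - 2) := by
      rw [Real.mul_rpow hc0.le (Real.rpow_nonneg hY _), ← Real.rpow_mul hY]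
      congr 2
      rw [hθdef]; field_simp
    have eX : (d * X ^ (2 * (p - 1))) ^ w = d ^ w * X ^ p := by
      rw [Real.mul_rpow hd0.le (Real.rpow_nonneg hX _), ← Real.rpow_mul hX]
      congr 2
      rw [hwdef]; field_simp
    rw [eY, eX] at key
    calc (p - 1) * (lam - b) * (Y ^ (p - 2) * X ^ p)
        = (c ^ θ * Y ^ (p - 2)) * (d ^ w * X ^ p) := by rw [← claim1]; ring
      _ ≤ θ * (c * Y ^ (2 * (p - 1))) + w * (d * X ^ (2 * (p - 1))) := key
      _ = (lam ^ 2 / (n : ℝ) - b * lam) * Y ^ (2 * (p - 1))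
            + ((n : ℝ) - 1) * K * X ^ (2 * (p - 1)) := by
          rw [← claim2, ← claim3]; ring
  -- bracket 3 is nonnegative
  have h3 : 0 ≤ ((n : ℝ) - 1) * K * X ^ (2 * (p - 1))
      - (p - 1) * (lam - b) * Y ^ (p - 2) * X ^ p
      + (lam ^ 2 / (n : ℝ) - b * lam) * Y ^ (2 * (p - 1)) := by
    linarith [hYoung]
  have h3' : 0 ≤ p * (p - 1) * (((n : ℝ) - 1) * K * X ^ (2 * (p - 1))
      - (p - 1) * (lam - b) * Y ^ (p - 2) * X ^ p
      + (lam ^ 2 / (n : ℝ) - b * lam) * Y ^ (2 * (p - 1))) :=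
    mul_nonneg (mul_nonneg hp0.le hp1.le) h3
  -- term 1 nonnegative
  have h1 : 0 ≤ ((n : ℝ) * p * (p - 1) / ((n : ℝ) - 1))
      * (1 / (n : ℝ) + lam * Y ^ (p - 1) / (n : ℝ) + (p - 1) * X ^ (p - 2) * A) ^ 2 :=
    mul_nonneg (div_nonneg (mul_nonneg (mul_nonneg hn0.le hp0.le) hp1.le) hn1.le)
      (sq_nonneg _)
  -- term 2 nonnegative
  have hBA : A ^ 2 ≤ B ^ 2 := by
    have h := pow_le_pow_left₀ (abs_nonneg A) hB 2
    rwa [sq_abs] at h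
  have h2 : 0 ≤ 2 * p * (p - 1) ^ 2 * X ^ (2 * (p - 2)) * (B ^ 2 - A ^ 2) :=
    mul_nonneg (mul_nonneg (mul_nonneg (mul_nonneg (by norm_num) hp0.le)
      (sq_nonneg _)) (Real.rpow_nonneg hX _)) (by linarith)
  -- term 4 equals the right-hand side
  have h4 : p * (p - 1) * (lam / (n : ℝ) - b) * Y ^ (p - 1)
      = (p - 1) * (p - 2) * (1 - 1 / (n : ℝ)) * lam * Y ^ (p - 1) := by
    rw [hb]; field_simp; ring
  linarith [h1, h2, h3', h4]
end
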